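/- arXiv:nlin/0307020 — 2 statements merged into one kernel-verified Lean document; each statement's English description precedes it below -/
import Mathlib

section
/- Assume D > 1, and let H be the subgroup of G generated by {c₁, …, c_D} ∪ {uₘ : m ≥ 2 and m ≠ D+1} ∪ {γ, η}, where γ = u₀ c₁ u₁ and η = u₀⁻¹ F u_{D+1}⁻¹ F⁻¹ u₀. Then for every element w of the subgroup generated by {c₁, …, c_D} ∪ {uₙ : n ≥ 0}, one has φ^{D+2}(w) ∈ H. -/
abbrev G : Type := FreeGroup (ℤ ⊕ ℤ)

/-- generator cₙ -/
def c (n : ℤ) : G := FreeGroup.of (Sum.inl n)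
/-- generator uₙ -/
def u (n : ℤ) : G := FreeGroup.of (Sum.inr n)

/-- F = c₁ c₂ ⋯ c_D -/
def F (D : ℕ) : G := ((List.range D).map (fun i => c ((i : ℤ) + 1))).prod

/-- the tangle endomorphism for minimum delay time D -/
def φ (D : ℕ) : G →* G := FreeGroup.lift fun x =>
  match x with
  | Sum.inl n => if n = (D : ℤ) then (F D)⁻¹ * (u 0)⁻¹ * F D else c (n + 1)
  | Sum.inr n => u (n + 1)

/-!
Write `F = c₁ ⋯ c_D` and `Aₖ = u₀ c₁ u₁ c₂ ⋯ u_{k-1} c_k` (`ucProd k`). Since `φ F = c₁⁻¹ u₀⁻¹ F`,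
induction gives `φᵏ F = Aₖ⁻¹ F` for `k ≤ D`, and `φ^{k+1} c_D = φᵏ (F⁻¹ u₀⁻¹ F)` is the conjugate
of `u_k⁻¹` by `φᵏ F`. As `φ^{D+2} c_j = φ^{j+2} c_D`, for `j < D` this is a conjugate of `u_{j+1}⁻¹`
by `A_{j+1}⁻¹ F`, which lies in `H` because `A₂ = γ c₂` and `u₂, …, u_D ∈ H`. For `j = D` the
generator `u_{D+1}` is not in `H`, but `φ^{D+1} F = F⁻¹ u₀ F · u_D⁻¹ A_D⁻¹ F`, so conjugating
`u_{D+1}⁻¹` by it gives the conjugate of `F⁻¹ η F` by `u_D⁻¹ A_D⁻¹ F ∈ H`.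
-/

open Function

lemma φ_u (D : ℕ) (n : ℤ) : φ D (u n) = u (n + 1) := by
  simp [φ, u]

lemma φ_c_of_ne {D : ℕ} {n : ℤ} (h : n ≠ D) : φ D (c n) = c (n + 1) := by
  simp [φ, c, h]

lemma φ_c_self (D : ℕ) : φ D (c D) = (F D)⁻¹ * (u 0)⁻¹ * F D := by
  simp [φ, c]

lemma iterate_φ_u (D k : ℕ) (n : ℤ) : (φ D)^[k] (u n) = u (n + k) := by
  induction k generalizing n with
  | zero => simp
  | succ k ih =>
    rw [iterate_succ_apply, φ_u, ih]
    push_cast; ring_nf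

lemma iterate_φ_c {D k : ℕ} {n : ℤ} (h : n + k ≤ D) : (φ D)^[k] (c n) = c (n + k) := by
  induction k generalizing n with
  | zero => simp
  | succ k ih =>
    push_cast at h
    rw [iterate_succ_apply, φ_c_of_ne (by omega), ih (by omega)]
    push_cast; ring_nf

lemma F_zero : F 0 = 1 := rfl

lemma F_succ (k : ℕ) : F (k + 1) = F k * c (k + 1) := by
  simp [F, List.range_succ]

def ucProd : ℕ → G
  | 0 => 1
  | k + 1 => ucProd k * u k * c (k + 1)

lemma φ_F_of_lt {D k : ℕ} (hk : k < D) : φ D (F k) = (c 1)⁻¹ * F (k + 1) := by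
  induction k with
  | zero => simp [F_succ, F_zero]
  | succ k ih =>
    rw [F_succ, map_mul, ih (by omega), φ_c_of_ne (by omega), F_succ (k + 1)]
    push_cast; group

lemma φ_F {D : ℕ} (hD : 1 ≤ D) : φ D (F D) = (c 1)⁻¹ * (u 0)⁻¹ * F D := by
  obtain ⟨E, rfl⟩ : ∃ E, D = E + 1 := ⟨D - 1, by omega⟩
  have hcD := φ_c_self (E + 1)
  push_cast at hcD
  rw [F_succ, map_mul, φ_F_of_lt (by omega), hcD, ← F_succ]
  group

lemma iterate_φ_F {D k : ℕ} (hD : 1 ≤ D) (hk : k ≤ D) :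
    (φ D)^[k] (F D) = (ucProd k)⁻¹ * F D := by
  induction k with
  | zero => simp [ucProd]
  | succ k ih =>
    rw [iterate_succ_apply, φ_F hD, iterate_map_mul, iterate_map_mul, iterate_map_inv,
      iterate_map_inv, iterate_φ_c (by omega), iterate_φ_u, ih (by omega), ucProd]
    group

lemma iterate_succ_φ_c_self (D k : ℕ) :
    (φ D)^[k + 1] (c D) = ((φ D)^[k] (F D))⁻¹ * (u k)⁻¹ * (φ D)^[k] (F D) := by
  rw [iterate_succ_apply, φ_c_self, iterate_map_mul, iterate_map_mul, iterate_map_inv,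
    iterate_map_inv, iterate_φ_u, zero_add]

lemma iterate_φ_F_succ_self {D : ℕ} (hD : 1 ≤ D) :
    (φ D)^[D + 1] (F D) = (F D)⁻¹ * u 0 * F D * ((u D)⁻¹ * (ucProd D)⁻¹ * F D) := by
  obtain ⟨E, rfl⟩ : ∃ E, D = E + 1 := ⟨D - 1, by omega⟩
  rw [iterate_succ_apply, φ_F hD, iterate_map_mul, iterate_map_mul, iterate_map_inv,
    iterate_map_inv, iterate_φ_u, iterate_φ_F hD le_rfl, iterate_succ_apply',
    iterate_φ_c (by omega), add_comm (1 : ℤ), zero_add, ← Nat.cast_succ, φ_c_self]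
  group

lemma iterate_φ_c_eq {D j : ℕ} (hj : j ≤ D) : (φ D)^[D + 2] (c j) = (φ D)^[j + 2] (c D) := by
  rw [show D + 2 = j + 2 + (D - j) by omega, iterate_add_apply, iterate_φ_c (by omega)]
  congr 2
  omega

section Membership

variable {D : ℕ} {K : Subgroup G} (hc : ∀ i : ℤ, 1 ≤ i → i ≤ D → c i ∈ K)
include hc

lemma F_mem {k : ℕ} (hk : k ≤ D) : F k ∈ K := by
  induction k with
  | zero => exact one_mem K
  | succ k ih => rw [F_succ]; exact mul_mem (ih (by omega)) (hc _ (by omega) (by omega))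

variable (hu : ∀ m : ℤ, 2 ≤ m → m ≤ D → u m ∈ K) (hγ : u 0 * c 1 * u 1 ∈ K)
include hu hγ

lemma ucProd_mem {k : ℕ} (h2 : 2 ≤ k) (hk : k ≤ D) : ucProd k ∈ K := by
  induction k, h2 using Nat.le_induction with
  | base =>
    have hA₂ : ucProd 2 = (u 0 * c 1 * u 1) * c 2 := by simp [ucProd]
    rw [hA₂]
    exact mul_mem hγ (hc 2 (by norm_num) (by omega))
  | succ k h2 ih =>
    rw [ucProd]
    exact mul_mem (mul_mem (ih (by omega)) (hu _ (by omega) (by omega)))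
      (hc _ (by omega) (by omega))

lemma iterate_φ_c_mem (hD : 1 < D) (hη : (u 0)⁻¹ * F D * (u ((D : ℤ) + 1))⁻¹ * (F D)⁻¹ * u 0 ∈ K)
    {j : ℕ} (hj1 : 1 ≤ j) (hjD : j ≤ D) : (φ D)^[D + 2] (c j) ∈ K := by
  have hF := F_mem hc (le_refl D)
  rw [iterate_φ_c_eq hjD]
  rcases hjD.lt_or_eq with hlt | rfl
  · rw [iterate_succ_φ_c_self, iterate_φ_F (by omega) hlt]
    have hA := ucProd_mem hc hu hγ (k := j + 1) (by omega) hlt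
    have huj := hu (j + 1 : ℕ) (by omega) (by omega)
    exact mul_mem (mul_mem (inv_mem (mul_mem (inv_mem hA) hF)) (inv_mem huj))
      (mul_mem (inv_mem hA) hF)
  · set Q := (u j)⁻¹ * (ucProd j)⁻¹ * F j
    have hQ : Q ∈ K := mul_mem (mul_mem (inv_mem (hu j (by omega) le_rfl))
      (inv_mem (ucProd_mem hc hu hγ (by omega) le_rfl))) hF
    have hconj : (φ j)^[j + 2] (c j) =
        Q⁻¹ * ((F j)⁻¹ * ((u 0)⁻¹ * F j * (u ((j : ℤ) + 1))⁻¹ * (F j)⁻¹ * u 0) * F j) * Q := by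
      rw [iterate_succ_φ_c_self, iterate_φ_F_succ_self hj1]
      push_cast
      simp only [Q]
      group
    rw [hconj]
    exact mul_mem (mul_mem (inv_mem hQ) (mul_mem (mul_mem (inv_mem hF) hη) hF)) hQ

end Membership

theorem stmt_8 (D : ℕ) (hD : 1 < D) :
    let γ : G := u 0 * c 1 * u 1
    let η : G := (u 0)⁻¹ * F D * (u ((D : ℤ) + 1))⁻¹ * (F D)⁻¹ * u 0
    let H : Subgroup G := Subgroup.closure
      ({g : G | ∃ i : ℤ, 1 ≤ i ∧ i ≤ (D : ℤ) ∧ g = c i} ∪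
       {g : G | ∃ m : ℤ, 2 ≤ m ∧ m ≠ (D : ℤ) + 1 ∧ g = u m} ∪ {γ, η})
    ∀ w ∈ Subgroup.closure
        ({g : G | ∃ i : ℤ, 1 ≤ i ∧ i ≤ (D : ℤ) ∧ g = c i} ∪
         {g : G | ∃ n : ℤ, 0 ≤ n ∧ g = u n}),
      (⇑(φ D))^[D + 2] w ∈ H := by
  intro γ η H w hw
  have hc (i : ℤ) (h1 : 1 ≤ i) (h2 : i ≤ D) : c i ∈ H :=
    Subgroup.subset_closure (Or.inl (Or.inl ⟨i, h1, h2, rfl⟩))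
  have hu (m : ℤ) (h2 : 2 ≤ m) (hm : m ≠ D + 1) : u m ∈ H :=
    Subgroup.subset_closure (Or.inl (Or.inr ⟨m, h2, hm, rfl⟩))
  have hγ : γ ∈ H := Subgroup.subset_closure (Or.inr (Or.inl rfl))
  have hη : η ∈ H := Subgroup.subset_closure (Or.inr (Or.inr rfl))
  -- `(⇑(φ D))^[n]` is definitionally the power `φ D ^ n` in `Monoid.End G`, a homomorphism
  refine (Subgroup.closure_le (K := H.comap ((show Monoid.End G from φ D) ^ (D + 2)))).2 ?_ hw
  rintro _ (⟨i, h1, h2, rfl⟩ | ⟨n, hn, rfl⟩)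
  · lift i to ℕ using by omega
    exact iterate_φ_c_mem hc (fun m h2 _ ↦ hu m h2 (by omega)) hγ hD hη (by omega) (by omega)
  · show (φ D)^[D + 2] (u n) ∈ H
    rw [iterate_φ_u]
    exact hu _ (by omega) (by omega)
end

section
/- For D = 1 and every n ≥ 1, the reduced word of φⁿ(c₁) has length 2^{n+1} − 1. -/
namespace FreeGroup

variable {α : Type*} {L : List (α × Bool)}

theorem map_fst_invRev : (invRev L).map Prod.fst = (L.map Prod.fst).reverse := by
  simp [invRev, Function.comp_def]

theorem IsReduced.invRev (h : IsReduced L) : IsReduced (invRev L) := by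
  unfold FreeGroup.invRev IsReduced
  rw [List.isChain_reverse, List.isChain_map]
  exact h.imp fun a b hab hba => by simpa using (hab hba.symm).symm

theorem IsReduced.invRev_append_cons (h : IsReduced L) {a : α × Bool}
    (ha : (L.map Prod.fst).head? ≠ some a.1) : IsReduced (FreeGroup.invRev L ++ a :: L) := by
  refine h.invRev.append (List.isChain_cons.2 ⟨?_, h⟩) ?_
  · intro b hb hab
    exact (ha (by rw [List.head?_map, Option.mem_def.1 hb, hab]; rfl)).elim
  · rintro b hb _ ⟨⟩ hba
    refine (ha ?_).elim
    rw [← List.getLast?_reverse, ← map_fst_invRev, List.getLast?_map, Option.mem_def.1 hb, ← hba]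
    rfl

theorem toWord_inv_mul_inv_of_mul [DecidableEq α] {x : FreeGroup α} {g : α}
    (hx : (x.toWord.map Prod.fst).head? ≠ some g) :
    (x⁻¹ * (of g)⁻¹ * x).toWord = invRev x.toWord ++ (g, false) :: x.toWord := by
  have hred := IsReduced.invRev_append_cons (a := (g, false)) isReduced_toWord hx
  rw [← hred.reduce_eq, ← toWord_mk]
  conv_lhs => rw [← mk_toWord (x := x)]
  simp [of, inv_mk, mul_mk, invRev]

end FreeGroup

theorem φ_one_c_one : φ 1 (c 1) = (c 1)⁻¹ * (u 0)⁻¹ * c 1 := by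
  simp [φ, c, F, List.range_one]

theorem iterate_φ_one_u_zero (n : ℕ) : (⇑(φ 1))^[n] (u 0) = u n := by
  induction n with
  | zero => rfl
  | succ n ih =>
    rw [Function.iterate_succ_apply', ih]
    simp [φ, u]

theorem iterate_succ_φ_one_c_one (n : ℕ) :
    (⇑(φ 1))^[n + 1] (c 1) =
      ((⇑(φ 1))^[n] (c 1))⁻¹ * (u n)⁻¹ * (⇑(φ 1))^[n] (c 1) := by
  rw [Function.iterate_succ_apply, φ_one_c_one, iterate_map_mul, iterate_map_mul,
    iterate_map_inv, iterate_map_inv, iterate_φ_one_u_zero]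

theorem toWord_iterate_succ_φ_one_c_one {n : ℕ}
    (h : (((⇑(φ 1))^[n] (c 1)).toWord.map Prod.fst).head? = some (Sum.inl 1)) :
    ((⇑(φ 1))^[n + 1] (c 1)).toWord =
      FreeGroup.invRev ((⇑(φ 1))^[n] (c 1)).toWord ++
        (Sum.inr (n : ℤ), false) :: ((⇑(φ 1))^[n] (c 1)).toWord := by
  rw [iterate_succ_φ_one_c_one]
  exact FreeGroup.toWord_inv_mul_inv_of_mul (by rw [h]; simp)

theorem head?_getLast?_map_fst_toWord_iterate_φ_one_c_one (n : ℕ) :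
    (((⇑(φ 1))^[n] (c 1)).toWord.map Prod.fst).head? = some (Sum.inl 1) ∧
      (((⇑(φ 1))^[n] (c 1)).toWord.map Prod.fst).getLast? = some (Sum.inl 1) := by
  induction n with
  | zero => simp [c]
  | succ n ih =>
    rw [toWord_iterate_succ_φ_one_c_one ih.1, List.map_append, FreeGroup.map_fst_invRev]
    simp [ih.2, List.getLast?_cons]

theorem length_toWord_iterate_φ_one_c_one (n : ℕ) :
    ((⇑(φ 1))^[n] (c 1)).toWord.length = 2 ^ (n + 1) - 1 := by
  induction n with
  | zero => simp [c]
  | succ n ih =>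
    rw [toWord_iterate_succ_φ_one_c_one (head?_getLast?_map_fst_toWord_iterate_φ_one_c_one n).1]
    simp only [List.length_append, List.length_cons, FreeGroup.invRev_length, ih]
    have : 1 ≤ 2 ^ (n + 1) := Nat.one_le_two_pow
    omega

theorem stmt_11_general (n : ℕ) :
    ((⇑(φ 1))^[n] (c 1)).toWord.length = 2 ^ (n + 1) - 1 :=
  length_toWord_iterate_φ_one_c_one n

theorem stmt_11 (n : ℕ) (hn : 1 ≤ n) :
    ((⇑(φ 1))^[n] (c 1)).toWord.length = 2 ^ (n + 1) - 1 :=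
  stmt_11_general n
end
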